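/- There exist unique series V₁(y;t), V₂(y;t) ∈ ℝ[y][[t]] and H₁(x;t), H₂(x;t) ∈ ℝ[x][[t]] (each t-coefficient a polynomial) such that the following three identities hold in ℝ[x,x⁻¹,y,y⁻¹][[t]]: K(x,y;t)·Q₋₁(x,1/y;t) = A(1/y;t) + H₁(x;t) + (1/y)H₂(x;t); K(x,y;t)·Q₀(x,y;t) = −x^p y^q + F(t) − V₁(y;t) − x·V₂(y;t) − H₁(x;t) − (1/y)H₂(x;t); and K(x,y;t)·Q₁(1/x,y;t) = B(1/x;t) + V₁(y;t) + x·V₂(y;t). -/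
import Mathlib


open scoped Classical

/-- The three-quadrant cone `{(i,j) : i > 0 or j > 0}`. -/
def Cone (v : ℤ × ℤ) : Prop := 0 < v.1 ∨ 0 < v.2

/-- Position after `k` steps of the walk starting at `start` with step sequence `σ`. -/
def walkPos (start : ℤ × ℤ) {n : ℕ} (σ : Fin n → ℤ × ℤ) (k : ℕ) : ℤ × ℤ :=
  start + ∑ i : Fin n, if (i : ℕ) < k then σ i else 0

/-- Total weight of walks of length `n` from `start` to `e` whose points all lie
in the three-quadrant cone: the coefficient `c(i,j;n)` of `C(x,y;t)`. -/
noncomputable def coneCount (S : Finset (ℤ × ℤ)) (w : ℤ × ℤ → ℝ) (start : ℤ × ℤ)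
    (n : ℕ) (e : ℤ × ℤ) : ℝ :=
  ∑ σ : Fin n → ↥S,
    if (∀ k ≤ n, Cone (walkPos start (fun i => (σ i : ℤ × ℤ)) k)) ∧
        walkPos start (fun i => (σ i : ℤ × ℤ)) n = e then
      ∏ i : Fin n, w (σ i) else 0

/-- Total weight of walks of length `n` from `start` whose first `n` points lie
in the cone and whose final point is `e`, outside of the cone: the exit
coefficient `h(i,j;n)`. -/
noncomputable def exitCount (S : Finset (ℤ × ℤ)) (w : ℤ × ℤ → ℝ) (start : ℤ × ℤ)
    (n : ℕ) (e : ℤ × ℤ) : ℝ :=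
  ∑ σ : Fin n → ↥S,
    if (∀ k < n, Cone (walkPos start (fun i => (σ i : ℤ × ℤ)) k)) ∧
        walkPos start (fun i => (σ i : ℤ × ℤ)) n = e ∧ ¬ Cone e then
      ∏ i : Fin n, w (σ i) else 0

/-- Coefficient of `x^i y^j t^n` in `K(x,y;t)·G` where `G` has coefficients `g`
and `K(x,y;t) = t·P(x,y) − 1`. -/
noncomputable def kernelMul (S : Finset (ℤ × ℤ)) (w : ℤ × ℤ → ℝ)
    (g : ℕ → ℤ × ℤ → ℝ) (n : ℕ) (v : ℤ × ℤ) : ℝ :=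
  (if n = 0 then 0 else ∑ s ∈ S, w s * g (n - 1) (v.1 - s.1, v.2 - s.2)) - g n v

/-- Coefficients of `Q₋₁(x,1/y;t)`: walks in the cone ending in
`𝒬₋₁ = {i>0, j<0}`. -/
noncomputable def qM1 (S : Finset (ℤ × ℤ)) (w : ℤ × ℤ → ℝ) (start : ℤ × ℤ)
    (n : ℕ) (v : ℤ × ℤ) : ℝ :=
  if 0 < v.1 ∧ v.2 < 0 then coneCount S w start n v else 0

/-- Coefficients of `Q₀(x,y;t)`: walks in the cone ending in
`𝒬̃₀ = {i>0, j≥0}`. -/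
noncomputable def q0 (S : Finset (ℤ × ℤ)) (w : ℤ × ℤ → ℝ) (start : ℤ × ℤ)
    (n : ℕ) (v : ℤ × ℤ) : ℝ :=
  if 0 < v.1 ∧ 0 ≤ v.2 then coneCount S w start n v else 0

/-- Coefficients of `Q₁(1/x,y;t)`: walks in the cone ending in
`𝒬̃₁ = {i≤0, j>0}`. -/
noncomputable def q1 (S : Finset (ℤ × ℤ)) (w : ℤ × ℤ → ℝ) (start : ℤ × ℤ)
    (n : ℕ) (v : ℤ × ℤ) : ℝ :=
  if v.1 ≤ 0 ∧ 0 < v.2 then coneCount S w start n v else 0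

section walk

variable (start : ℤ × ℤ)

lemma walkPos_zero {n : ℕ} (σ : Fin n → ℤ × ℤ) : walkPos start σ 0 = start := by
  simp [walkPos]

lemma walkPos_succ {n : ℕ} (σ : Fin n → ℤ × ℤ) {k : ℕ} (hk : k < n) :
    walkPos start σ (k + 1) = walkPos start σ k + σ ⟨k, hk⟩ := by
  unfold walkPos
  rw [add_assoc]
  congr 1
  have h : ∀ i : Fin n, (if (i : ℕ) < k + 1 then σ i else 0)
      = (if (i : ℕ) < k then σ i else 0) + (if (i : ℕ) = k then σ i else 0) := by
    intro i
    split_ifs with h1 h2 h3 h4 h5 <;> simp_all <;> omega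
  rw [Finset.sum_congr rfl fun i _ => h i, Finset.sum_add_distrib]
  congr 1
  rw [Finset.sum_eq_single (⟨k, hk⟩ : Fin n)]
  · simp
  · intro b _ hb
    rw [if_neg]
    intro hbk
    exact hb (Fin.ext hbk)
  · simp

lemma walkPos_snoc {n : ℕ} (τ : Fin n → ℤ × ℤ) (s : ℤ × ℤ) {k : ℕ} (hk : k ≤ n) :
    walkPos start (Fin.snoc τ s) k = walkPos start τ k := by
  unfold walkPos
  congr 1
  rw [Fin.sum_univ_castSucc]
  have h : ¬ ((n : ℕ) < k) := by omega
  simp [h]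

lemma walkPos_snoc_last {n : ℕ} (τ : Fin n → ℤ × ℤ) (s : ℤ × ℤ) :
    walkPos start (Fin.snoc τ s) (n + 1) = walkPos start τ n + s := by
  unfold walkPos
  rw [Fin.sum_univ_castSucc]
  have h1 : ∀ i : Fin n, ((Fin.castSucc i : Fin (n+1)) : ℕ) < n + 1 := fun i => by
    simp
  have h2 : ∀ i : Fin n, (i : ℕ) < n := Fin.is_lt
  simp only [Fin.snoc_castSucc, Fin.snoc_last, Fin.val_last, Nat.lt_succ_self, if_pos]
  rw [add_assoc]
  congr 1
  congr 1
  apply Finset.sum_congr rfl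
  intro i _
  rw [if_pos (h1 i), if_pos (h2 i)]

end walk

section cnt
variable (S : Finset (ℤ × ℤ)) (w : ℤ × ℤ → ℝ) (start : ℤ × ℤ)

lemma coneCount_of_not_cone {v : ℤ × ℤ} (h : ¬ Cone v) (n : ℕ) :
    coneCount S w start n v = 0 := by
  apply Finset.sum_eq_zero
  intro σ _
  rw [if_neg]
  rintro ⟨h1, h2⟩
  exact h (h2 ▸ h1 n le_rfl)

lemma exitCount_of_cone {v : ℤ × ℤ} (h : Cone v) (n : ℕ) :
    exitCount S w start n v = 0 := by
  apply Finset.sum_eq_zero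
  intro σ _
  rw [if_neg]
  rintro ⟨-, -, h3⟩
  exact h3 h

lemma coneCount_zero (hstart : Cone start) (v : ℤ × ℤ) :
    coneCount S w start 0 v = if v = start then 1 else 0 := by
  unfold coneCount
  have : Subsingleton (Fin 0 → ↥S) := ⟨fun a b => funext fun i => Fin.elim0 i⟩
  rw [Fintype.sum_subsingleton _ (fun i : Fin 0 => (Fin.elim0 i : ↥S))]
  simp [walkPos, hstart, eq_comm]

lemma exitCount_zero (hstart : Cone start) (v : ℤ × ℤ) :
    exitCount S w start 0 v = 0 := by
  apply Finset.sum_eq_zero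
  intro σ _
  rw [if_neg]
  rintro ⟨-, h2, h3⟩
  rw [walkPos_zero] at h2  -- need walkPos_zero: add
  exact h3 (h2 ▸ hstart)

end cnt

section step
variable (S : Finset (ℤ × ℤ)) (w : ℤ × ℤ → ℝ) (start : ℤ × ℤ)

noncomputable def snocEquiv (n : ℕ) : ((Fin n → ↥S) × ↥S) ≃ (Fin (n+1) → ↥S) where
  toFun p := Fin.snoc p.1 p.2
  invFun σ := (Fin.init σ, σ (Fin.last n))
  left_inv p := by simp [Fin.init_snoc, Fin.snoc_last]
  right_inv σ := by simp [Fin.snoc_init_self]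

lemma step_sum (hstart : Cone start) (n : ℕ) (v : ℤ × ℤ) :
    (∑ s ∈ S, w s * coneCount S w start n (v.1 - s.1, v.2 - s.2)) =
      if Cone v then coneCount S w start (n+1) v else exitCount S w start (n+1) v := by
  have key : (if Cone v then coneCount S w start (n+1) v else exitCount S w start (n+1) v)
      = ∑ σ : Fin (n+1) → ↥S,
          if (∀ k ≤ n, Cone (walkPos start (fun i => (σ i : ℤ × ℤ)) k)) ∧
              walkPos start (fun i => (σ i : ℤ × ℤ)) (n+1) = v then
            ∏ i : Fin (n+1), w (σ i) else 0 := by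
    split_ifs with hv
    · apply Finset.sum_congr rfl
      intro σ _
      apply if_congr _ rfl rfl
      constructor
      · rintro ⟨h1, h2⟩
        exact ⟨fun k hk => h1 k (by omega), h2⟩
      · rintro ⟨h1, h2⟩
        refine ⟨fun k hk => ?_, h2⟩
        rcases Nat.lt_or_ge k (n+1) with h | h
        · exact h1 k (by omega)
        · have : k = n + 1 := by omega
          rw [this, h2]; exact hv
    · apply Finset.sum_congr rfl
      intro σ _
      apply if_congr _ rfl rfl
      constructor
      · rintro ⟨h1, h2, -⟩
        exact ⟨fun k hk => h1 k (by omega), h2⟩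
      · rintro ⟨h1, h2⟩
        exact ⟨fun k hk => h1 k (by omega), h2, hv⟩
  rw [key, ← Equiv.sum_comp (snocEquiv S n), Fintype.sum_prod_type_right]
  rw [← Finset.sum_coe_sort S (fun s => w s * coneCount S w start n (v.1 - s.1, v.2 - s.2))]
  apply Finset.sum_congr rfl
  intro s _
  rw [coneCount, Finset.mul_sum]
  apply Finset.sum_congr rfl
  intro τ _
  have hcomp : (fun i => ((snocEquiv S n (τ, s)) i : ℤ × ℤ))
      = Fin.snoc (fun i => (τ i : ℤ × ℤ)) (s : ℤ × ℤ) := by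
    funext i
    refine Fin.lastCases ?_ ?_ i
    · simp [snocEquiv]
    · intro j; simp [snocEquiv]
  have hprod : (∏ i : Fin (n+1), w ((snocEquiv S n (τ, s)) i : ℤ × ℤ))
      = (∏ i : Fin n, w (τ i)) * w s := by
    rw [Fin.prod_univ_castSucc]
    simp [snocEquiv]
  have hcond : ((∀ k ≤ n, Cone (walkPos start (fun i => ((snocEquiv S n (τ, s)) i : ℤ × ℤ)) k)) ∧
        walkPos start (fun i => ((snocEquiv S n (τ, s)) i : ℤ × ℤ)) (n+1) = v)
      ↔ ((∀ k ≤ n, Cone (walkPos start (fun i => (τ i : ℤ × ℤ)) k)) ∧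
        walkPos start (fun i => (τ i : ℤ × ℤ)) n = (v.1 - (s : ℤ × ℤ).1, v.2 - (s : ℤ × ℤ).2)) := by
    rw [hcomp]
    constructor
    · rintro ⟨h1, h2⟩
      rw [walkPos_snoc_last] at h2
      refine ⟨fun k hk => by rw [← walkPos_snoc start (fun i => (τ i : ℤ × ℤ)) (s : ℤ × ℤ) hk]; exact h1 k hk, ?_⟩
      have h2a := congrArg Prod.fst h2
      have h2b := congrArg Prod.snd h2
      simp only [Prod.fst_add, Prod.snd_add] at h2a h2b
      ext
      · simp only; omega
      · simp only; omega
    · rintro ⟨h1, h2⟩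
      refine ⟨fun k hk => by rw [walkPos_snoc start (fun i => (τ i : ℤ × ℤ)) (s : ℤ × ℤ) hk]; exact h1 k hk, ?_⟩
      rw [walkPos_snoc_last, h2]
      ext <;> simp <;> omega
  rw [hprod]
  by_cases hc : ((∀ k ≤ n, Cone (walkPos start (fun i => (τ i : ℤ × ℤ)) k)) ∧
        walkPos start (fun i => (τ i : ℤ × ℤ)) n = (v.1 - (s : ℤ × ℤ).1, v.2 - (s : ℤ × ℤ).2))
  · rw [if_pos (hcond.mpr hc), if_pos hc]
    ring
  · rw [if_neg (fun h => hc (hcond.mp h)), if_neg hc, mul_zero]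

end step

section more
variable (S : Finset (ℤ × ℤ)) (w : ℤ × ℤ → ℝ) (start : ℤ × ℤ)

lemma exitCount_off_axes
    (hSsteps : ∀ s ∈ S, s ≠ (0, 0) ∧ s.1.natAbs ≤ 1 ∧ s.2.natAbs ≤ 1)
    (hstart : Cone start) {v : ℤ × ℤ} (hv1 : v.1 ≠ 0) (hv2 : v.2 ≠ 0) (n : ℕ) :
    exitCount S w start n v = 0 := by
  by_cases hv : Cone v
  · exact exitCount_of_cone S w start hv n
  cases n with
  | zero => exact exitCount_zero S w start hstart v
  | succ m =>
    apply Finset.sum_eq_zero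
    intro σ _
    rw [if_neg]
    rintro ⟨h1, h2, -⟩
    have hu : Cone (walkPos start (fun i => (σ i : ℤ × ℤ)) m) := h1 m (by omega)
    have hstep := walkPos_succ start (fun i => (σ i : ℤ × ℤ)) (Nat.lt_succ_self m)
    rw [h2] at hstep
    have hmem := hSsteps _ (σ ⟨m, Nat.lt_succ_self m⟩).2
    have hb1 : ((σ ⟨m, Nat.lt_succ_self m⟩ : ℤ × ℤ)).1.natAbs ≤ 1 := hmem.2.1
    have hb2 : ((σ ⟨m, Nat.lt_succ_self m⟩ : ℤ × ℤ)).2.natAbs ≤ 1 := hmem.2.2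
    have e1 := congrArg Prod.fst hstep
    have e2 := congrArg Prod.snd hstep
    simp only [Prod.fst_add, Prod.snd_add] at e1 e2
    rcases hu with hu | hu
    · have : 0 < v.1 ∨ v.1 = 0 := by omega
      rcases this with h | h
      · exact hv (Or.inl h)
      · exact hv1 h
    · have : 0 < v.2 ∨ v.2 = 0 := by omega
      rcases this with h | h
      · exact hv (Or.inr h)
      · exact hv2 h

lemma coneCount_bound
    (hSsteps : ∀ s ∈ S, s ≠ (0, 0) ∧ s.1.natAbs ≤ 1 ∧ s.2.natAbs ≤ 1)
    {n : ℕ} {v : ℤ × ℤ} (h : coneCount S w start n v ≠ 0) :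
    |v.1 - start.1| ≤ n ∧ |v.2 - start.2| ≤ n := by
  obtain ⟨σ, -, hσ⟩ := Finset.exists_ne_zero_of_sum_ne_zero h
  have hcond : (∀ k ≤ n, Cone (walkPos start (fun i => (σ i : ℤ × ℤ)) k)) ∧
      walkPos start (fun i => (σ i : ℤ × ℤ)) n = v := by
    by_contra hc
    rw [if_neg hc] at hσ
    exact hσ rfl
  have h2 := hcond.2
  unfold walkPos at h2
  have hsum : ∀ i : Fin n, (if (i : ℕ) < n then ((σ i : ℤ × ℤ)) else 0) = (σ i : ℤ × ℤ) :=
    fun i => if_pos i.isLt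
  rw [Finset.sum_congr rfl fun i _ => hsum i] at h2
  have e1 : v.1 - start.1 = ∑ i : Fin n, ((σ i : ℤ × ℤ)).1 := by
    have := congrArg Prod.fst h2
    simp only [Prod.fst_add, Prod.fst_sum] at this
    omega
  have e2 : v.2 - start.2 = ∑ i : Fin n, ((σ i : ℤ × ℤ)).2 := by
    have := congrArg Prod.snd h2
    simp only [Prod.snd_add, Prod.snd_sum] at this
    omega
  constructor
  · rw [e1]
    calc |∑ i : Fin n, ((σ i : ℤ × ℤ)).1| ≤ ∑ i : Fin n, |((σ i : ℤ × ℤ)).1| :=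
          Finset.abs_sum_le_sum_abs _ _
      _ ≤ ∑ _i : Fin n, (1 : ℤ) := by
          apply Finset.sum_le_sum
          intro i _
          have h := (hSsteps _ (σ i).2).2.1
          rw [Int.abs_eq_natAbs]
          exact_mod_cast h
      _ = n := by simp
  · rw [e2]
    calc |∑ i : Fin n, ((σ i : ℤ × ℤ)).2| ≤ ∑ i : Fin n, |((σ i : ℤ × ℤ)).2| :=
          Finset.abs_sum_le_sum_abs _ _
      _ ≤ ∑ _i : Fin n, (1 : ℤ) := by
          apply Finset.sum_le_sum
          intro i _
          have h := (hSsteps _ (σ i).2).2.2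
          rw [Int.abs_eq_natAbs]
          exact_mod_cast h
      _ = n := by simp

end more

section ker
variable (S : Finset (ℤ × ℤ)) (w : ℤ × ℤ → ℝ) (start : ℤ × ℤ)

lemma kernelMul_coneCount (hstart : Cone start) (n : ℕ) (v : ℤ × ℤ) :
    kernelMul S w (coneCount S w start) n v =
      -(if n = 0 ∧ v = start then 1 else 0) + exitCount S w start n v := by
  cases n with
  | zero =>
    unfold kernelMul
    rw [if_pos rfl, coneCount_zero S w start hstart, exitCount_zero S w start hstart]
    simp [eq_comm]
  | succ m =>
    unfold kernelMul
    rw [if_neg (Nat.succ_ne_zero m)]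
    have hs : (m + 1) - 1 = m := rfl
    rw [hs, step_sum S w start hstart m v]
    have h0 : (if m + 1 = 0 ∧ v = start then (1:ℝ) else 0) = 0 := by simp
    rw [h0, neg_zero, zero_add]
    by_cases hv : Cone v
    · rw [if_pos hv, exitCount_of_cone S w start hv (m+1), sub_self]
    · rw [if_neg hv, coneCount_of_not_cone S w start hv (m+1), sub_zero]

lemma q0_eq (n : ℕ) (v : ℤ × ℤ) :
    q0 S w start n v = coneCount S w start n v - qM1 S w start n v - q1 S w start n v := by
  unfold q0 qM1 q1
  by_cases h1 : 0 < v.1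
  · by_cases h2 : 0 ≤ v.2
    · rw [if_pos ⟨h1, h2⟩, if_neg (fun h => by omega), if_neg (fun h => by omega)]
      ring
    · rw [if_neg (fun h => h2 h.2), if_pos ⟨h1, by omega⟩, if_neg (fun h => by omega)]
      ring
  · by_cases h3 : 0 < v.2
    · rw [if_neg (fun h => h1 h.1), if_neg (fun h => h1 h.1), if_pos ⟨by omega, h3⟩]
      ring
    · rw [if_neg (fun h => h1 h.1), if_neg (fun h => h1 h.1), if_neg (fun h => h3 h.2),
        coneCount_of_not_cone S w start (fun h => h.elim h1 h3)]
      ring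

lemma kernelMul_split (g a b c : ℕ → ℤ × ℤ → ℝ)
    (hg : ∀ n v, g n v = a n v - b n v - c n v) (n : ℕ) (v : ℤ × ℤ) :
    kernelMul S w g n v =
      kernelMul S w a n v - kernelMul S w b n v - kernelMul S w c n v := by
  unfold kernelMul
  rw [hg]
  cases n with
  | zero => simp only [reduceIte]; ring
  | succ m =>
    rw [if_neg (Nat.succ_ne_zero m), if_neg (Nat.succ_ne_zero m), if_neg (Nat.succ_ne_zero m),
      if_neg (Nat.succ_ne_zero m)]
    have : ∀ s ∈ S, w s * g (m + 1 - 1) (v.1 - s.1, v.2 - s.2)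
        = w s * a (m + 1 - 1) (v.1 - s.1, v.2 - s.2)
          - w s * b (m + 1 - 1) (v.1 - s.1, v.2 - s.2)
          - w s * c (m + 1 - 1) (v.1 - s.1, v.2 - s.2) := by
      intro s _
      rw [hg]
      ring
    rw [Finset.sum_congr rfl this]
    rw [Finset.sum_sub_distrib, Finset.sum_sub_distrib]
    ring

lemma kernelMul_bound
    (hSsteps : ∀ s ∈ S, s ≠ (0, 0) ∧ s.1.natAbs ≤ 1 ∧ s.2.natAbs ≤ 1)
    (g : ℕ → ℤ × ℤ → ℝ)
    (hg : ∀ m u, g m u ≠ 0 → |u.1 - start.1| ≤ m ∧ |u.2 - start.2| ≤ m)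
    {n : ℕ} {v : ℤ × ℤ} (h : kernelMul S w g n v ≠ 0) :
    |v.1 - start.1| ≤ n + 1 ∧ |v.2 - start.2| ≤ n + 1 := by
  unfold kernelMul at h
  have : (if n = 0 then 0 else ∑ s ∈ S, w s * g (n - 1) (v.1 - s.1, v.2 - s.2)) ≠ 0
      ∨ g n v ≠ 0 := by
    by_contra hc
    push_neg at hc
    rw [hc.1, hc.2, sub_zero] at h
    exact h rfl
  rcases this with h' | h'
  · have hn : n ≠ 0 := by
      intro hn0
      rw [if_pos hn0] at h'
      exact h' rfl
    rw [if_neg hn] at h'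
    obtain ⟨s, hs, hterm⟩ := Finset.exists_ne_zero_of_sum_ne_zero h'
    have hgne : g (n - 1) (v.1 - s.1, v.2 - s.2) ≠ 0 := by
      intro h0
      rw [h0, mul_zero] at hterm
      exact hterm rfl
    have hb := hg _ _ hgne
    have hm := hSsteps s hs
    have hb1 : |v.1 - s.1 - start.1| ≤ ((n - 1 : ℕ) : ℤ) := by simpa using hb.1
    have hb2 : |v.2 - s.2 - start.2| ≤ ((n - 1 : ℕ) : ℤ) := by simpa using hb.2
    have hs1 : |s.1| ≤ 1 := by rw [Int.abs_eq_natAbs]; exact_mod_cast hm.2.1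
    have hs2 : |s.2| ≤ 1 := by rw [Int.abs_eq_natAbs]; exact_mod_cast hm.2.2
    have t1 : |v.1 - start.1| ≤ |v.1 - s.1 - start.1| + |s.1| := by
      calc |v.1 - start.1| = |(v.1 - s.1 - start.1) + s.1| := by congr 1; ring
        _ ≤ _ := abs_add_le _ _
    have t2 : |v.2 - start.2| ≤ |v.2 - s.2 - start.2| + |s.2| := by
      calc |v.2 - start.2| = |(v.2 - s.2 - start.2) + s.2| := by congr 1; ring
        _ ≤ _ := abs_add_le _ _
    constructor <;> omega
  · have hb := hg _ _ h'
    omega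

end ker

section regional
variable (S : Finset (ℤ × ℤ)) (w : ℤ × ℤ → ℝ) (p q : ℤ)

lemma idQM1 (hSsteps : ∀ s ∈ S, s ≠ (0, 0) ∧ s.1.natAbs ≤ 1 ∧ s.2.natAbs ≤ 1)
    (hp : 0 < p) (hq : 0 ≤ q) (n : ℕ) (i j : ℤ) (hj0 : j ≠ 0) (hj1 : j ≠ -1) :
    kernelMul S w (qM1 S w (p, q)) n (i, j) =
      if i = 0 ∧ j < 0 then exitCount S w (p, q) n (0, j) else 0 := by
  have hstart : Cone (p, q) := Or.inl hp
  cases n with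
  | zero =>
    have hqm : qM1 S w (p, q) 0 (i, j) = 0 := by
      unfold qM1
      split_ifs with h
      · rw [coneCount_zero S w (p, q) hstart, if_neg]
        intro he
        have h1 : j = q := congrArg Prod.snd he
        have h2 : j < 0 := h.2
        omega
      · rfl
    rw [show kernelMul S w (qM1 S w (p, q)) 0 (i, j) = -qM1 S w (p, q) 0 (i, j) by
      unfold kernelMul; rw [if_pos rfl]; ring]
    rw [hqm]
    split_ifs with h
    · rw [exitCount_zero S w (p, q) hstart]; ring
    · ring
  | succ m =>
    unfold kernelMul
    rw [if_neg (Nat.succ_ne_zero m)]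
    simp only [Nat.add_sub_cancel]
    by_cases hjpos : 0 < j
    · have hsum : ∀ s ∈ S, w s * qM1 S w (p, q) m ((i, j).1 - s.1, (i, j).2 - s.2) = 0 := by
        intro s hsS
        have hb := (hSsteps s hsS).2.2
        have e : qM1 S w (p, q) m ((i, j).1 - s.1, (i, j).2 - s.2) = 0 := by
          unfold qM1
          rw [if_neg]
          rintro ⟨-, h2⟩
          have h2' : j - s.2 < 0 := h2
          omega
        rw [e]; ring
      rw [Finset.sum_eq_zero hsum]
      have e2 : qM1 S w (p, q) (m + 1) (i, j) = 0 := by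
        unfold qM1
        rw [if_neg]
        rintro ⟨-, h⟩
        have h' : j < 0 := h
        omega
      rw [e2, if_neg]
      · ring
      · rintro ⟨-, h⟩; omega
    · have hj2 : j ≤ -2 := by omega
      have hsum : ∀ s ∈ S, w s * qM1 S w (p, q) m ((i, j).1 - s.1, (i, j).2 - s.2)
          = w s * coneCount S w (p, q) m ((i, j).1 - s.1, (i, j).2 - s.2) := by
        intro s hsS
        have hb := (hSsteps s hsS).2.2
        by_cases hpos : 0 < i - s.1
        · have e : qM1 S w (p, q) m ((i, j).1 - s.1, (i, j).2 - s.2)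
              = coneCount S w (p, q) m ((i, j).1 - s.1, (i, j).2 - s.2) := by
            unfold qM1
            rw [if_pos]
            exact ⟨hpos, show j - s.2 < 0 by omega⟩
          rw [e]
        · have e : qM1 S w (p, q) m ((i, j).1 - s.1, (i, j).2 - s.2) = 0 := by
            unfold qM1
            rw [if_neg]
            rintro ⟨h, -⟩
            exact hpos h
          have e' : coneCount S w (p, q) m ((i, j).1 - s.1, (i, j).2 - s.2) = 0 := by
            apply coneCount_of_not_cone
            rintro (h | h)
            · exact hpos h
            · have h' : 0 < j - s.2 := h
              omega
          rw [e, e']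
      rw [Finset.sum_congr rfl hsum, step_sum S w (p, q) hstart m (i, j)]
      rcases lt_trichotomy i 0 with hi | hi | hi
      · have hnc : ¬ Cone (i, j) := by
          rintro (h | h)
          · have h' : 0 < i := h; omega
          · have h' : 0 < j := h; omega
        rw [if_neg hnc]
        have e2 : qM1 S w (p, q) (m + 1) (i, j) = 0 := by
          unfold qM1
          rw [if_neg]
          rintro ⟨h, -⟩
          have h' : 0 < i := h
          omega
        rw [e2, exitCount_off_axes S w (p, q) hSsteps hstart
          (show (i, j).1 ≠ 0 from by omega) (show (i, j).2 ≠ 0 from by omega)]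
        rw [if_neg (by rintro ⟨h, -⟩; omega)]
        ring
      · subst hi
        have hnc : ¬ Cone ((0 : ℤ), j) := by
          rintro (h | h)
          · exact absurd h (lt_irrefl 0)
          · have h' : 0 < j := h; omega
        rw [if_neg hnc]
        have e2 : qM1 S w (p, q) (m + 1) ((0 : ℤ), j) = 0 := by
          unfold qM1
          rw [if_neg]
          rintro ⟨h, -⟩
          exact absurd h (lt_irrefl 0)
        rw [e2, if_pos ⟨rfl, show j < 0 by omega⟩]
        ring
      · rw [if_pos (show Cone (i, j) from Or.inl hi)]
        have e2 : qM1 S w (p, q) (m + 1) (i, j) = coneCount S w (p, q) (m + 1) (i, j) := by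
          unfold qM1
          rw [if_pos]
          exact ⟨hi, show j < 0 by omega⟩
        rw [e2, if_neg (by rintro ⟨h, -⟩; omega)]
        ring

lemma idQ1 (hSsteps : ∀ s ∈ S, s ≠ (0, 0) ∧ s.1.natAbs ≤ 1 ∧ s.2.natAbs ≤ 1)
    (hp : 0 < p) (hq : 0 ≤ q) (n : ℕ) (i j : ℤ) (hi0 : i ≠ 0) (hi1 : i ≠ 1) :
    kernelMul S w (q1 S w (p, q)) n (i, j) =
      if j = 0 ∧ i < 0 then exitCount S w (p, q) n (i, 0) else 0 := by
  have hstart : Cone (p, q) := Or.inl hp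
  cases n with
  | zero =>
    have hqm : q1 S w (p, q) 0 (i, j) = 0 := by
      unfold q1
      split_ifs with h
      · rw [coneCount_zero S w (p, q) hstart, if_neg]
        intro he
        have h1 : i = p := congrArg Prod.fst he
        have h2 : i ≤ 0 := h.1
        omega
      · rfl
    rw [show kernelMul S w (q1 S w (p, q)) 0 (i, j) = -q1 S w (p, q) 0 (i, j) by
      unfold kernelMul; rw [if_pos rfl]; ring]
    rw [hqm]
    split_ifs with h
    · rw [exitCount_zero S w (p, q) hstart]; ring
    · ring
  | succ m =>
    unfold kernelMul
    rw [if_neg (Nat.succ_ne_zero m)]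
    simp only [Nat.add_sub_cancel]
    by_cases hipos : 0 < i
    · have hi2 : 2 ≤ i := by omega
      have hsum : ∀ s ∈ S, w s * q1 S w (p, q) m ((i, j).1 - s.1, (i, j).2 - s.2) = 0 := by
        intro s hsS
        have hb := (hSsteps s hsS).2.1
        have e : q1 S w (p, q) m ((i, j).1 - s.1, (i, j).2 - s.2) = 0 := by
          unfold q1
          rw [if_neg]
          rintro ⟨h1, -⟩
          have h1' : i - s.1 ≤ 0 := h1
          omega
        rw [e]; ring
      rw [Finset.sum_eq_zero hsum]
      have e2 : q1 S w (p, q) (m + 1) (i, j) = 0 := by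
        unfold q1
        rw [if_neg]
        rintro ⟨h, -⟩
        have h' : i ≤ 0 := h
        omega
      rw [e2, if_neg]
      · ring
      · rintro ⟨-, h⟩; omega
    · have hi2 : i ≤ -1 := by omega
      have hsum : ∀ s ∈ S, w s * q1 S w (p, q) m ((i, j).1 - s.1, (i, j).2 - s.2)
          = w s * coneCount S w (p, q) m ((i, j).1 - s.1, (i, j).2 - s.2) := by
        intro s hsS
        have hb := (hSsteps s hsS).2.1
        by_cases hpos : 0 < j - s.2
        · have e : q1 S w (p, q) m ((i, j).1 - s.1, (i, j).2 - s.2)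
              = coneCount S w (p, q) m ((i, j).1 - s.1, (i, j).2 - s.2) := by
            unfold q1
            rw [if_pos]
            exact ⟨show i - s.1 ≤ 0 by omega, hpos⟩
          rw [e]
        · have e : q1 S w (p, q) m ((i, j).1 - s.1, (i, j).2 - s.2) = 0 := by
            unfold q1
            rw [if_neg]
            rintro ⟨-, h⟩
            exact hpos h
          have e' : coneCount S w (p, q) m ((i, j).1 - s.1, (i, j).2 - s.2) = 0 := by
            apply coneCount_of_not_cone
            rintro (h | h)
            · have h' : 0 < i - s.1 := h
              omega
            · exact hpos h
          rw [e, e']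
      rw [Finset.sum_congr rfl hsum, step_sum S w (p, q) hstart m (i, j)]
      rcases lt_trichotomy j 0 with hj | hj | hj
      · have hnc : ¬ Cone (i, j) := by
          rintro (h | h)
          · have h' : 0 < i := h; omega
          · have h' : 0 < j := h; omega
        rw [if_neg hnc]
        have e2 : q1 S w (p, q) (m + 1) (i, j) = 0 := by
          unfold q1
          rw [if_neg]
          rintro ⟨-, h⟩
          have h' : 0 < j := h
          omega
        rw [e2, exitCount_off_axes S w (p, q) hSsteps hstart
          (show (i, j).1 ≠ 0 from by omega) (show (i, j).2 ≠ 0 from by omega)]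
        rw [if_neg (by rintro ⟨h, -⟩; omega)]
        ring
      · subst hj
        have hnc : ¬ Cone (i, (0 : ℤ)) := by
          rintro (h | h)
          · have h' : 0 < i := h; omega
          · exact absurd h (lt_irrefl 0)
        rw [if_neg hnc]
        have e2 : q1 S w (p, q) (m + 1) (i, (0 : ℤ)) = 0 := by
          unfold q1
          rw [if_neg]
          rintro ⟨-, h⟩
          exact absurd h (lt_irrefl 0)
        rw [e2, if_pos ⟨rfl, show i < 0 by omega⟩]
        ring
      · rw [if_pos (show Cone (i, j) from Or.inr hj)]
        have e2 : q1 S w (p, q) (m + 1) (i, j) = coneCount S w (p, q) (m + 1) (i, j) := by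
          unfold q1
          rw [if_pos]
          exact ⟨show i ≤ 0 by omega, hj⟩
        rw [e2, if_neg (by rintro ⟨h, -⟩; omega)]
        ring

end regional

section full
variable (S : Finset (ℤ × ℤ)) (w : ℤ × ℤ → ℝ) (p q : ℤ)

lemma idQM1_full (hSsteps : ∀ s ∈ S, s ≠ (0, 0) ∧ s.1.natAbs ≤ 1 ∧ s.2.natAbs ≤ 1)
    (hp : 0 < p) (hq : 0 ≤ q) (n : ℕ) (i j : ℤ) :
    kernelMul S w (qM1 S w (p, q)) n (i, j) =
      (if i = 0 ∧ j < 0 then exitCount S w (p, q) n (0, j) else 0)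
        + (if j = 0 then kernelMul S w (qM1 S w (p, q)) n (i, 0) else 0)
        + (if j = -1 then kernelMul S w (qM1 S w (p, q)) n (i, -1)
            - (if i = 0 then exitCount S w (p, q) n (0, -1) else 0) else 0) := by
  by_cases hj0 : j = 0
  · subst hj0
    rw [if_neg (by rintro ⟨-, h⟩; exact lt_irrefl 0 h), if_pos rfl, if_neg (by norm_num)]
    ring
  by_cases hj1 : j = -1
  · subst hj1
    rw [if_neg (show ¬((-1 : ℤ) = 0) by norm_num), if_pos rfl]
    have h1 : (if i = 0 ∧ (-1 : ℤ) < 0 then exitCount S w (p, q) n (0, -1) else 0)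
        = (if i = 0 then exitCount S w (p, q) n (0, -1) else 0) := by
      apply if_congr _ rfl rfl
      constructor
      · exact fun h => h.1
      · exact fun h => ⟨h, by norm_num⟩
    rw [h1]
    ring
  · rw [if_neg hj0, if_neg hj1, idQM1 S w p q hSsteps hp hq n i j hj0 hj1]
    ring

lemma idQ1_full (hSsteps : ∀ s ∈ S, s ≠ (0, 0) ∧ s.1.natAbs ≤ 1 ∧ s.2.natAbs ≤ 1)
    (hp : 0 < p) (hq : 0 ≤ q) (n : ℕ) (i j : ℤ) :
    kernelMul S w (q1 S w (p, q)) n (i, j) =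
      (if j = 0 ∧ i < 0 then exitCount S w (p, q) n (i, 0) else 0)
        + (if i = 0 then kernelMul S w (q1 S w (p, q)) n (0, j) else 0)
        + (if i = 1 then kernelMul S w (q1 S w (p, q)) n (1, j) else 0) := by
  by_cases hi0 : i = 0
  · subst hi0
    rw [if_neg (by rintro ⟨-, h⟩; exact lt_irrefl 0 h), if_pos rfl, if_neg (by norm_num)]
    ring
  by_cases hi1 : i = 1
  · subst hi1
    rw [if_neg (show ¬(j = 0 ∧ (1 : ℤ) < 0) from by rintro ⟨-, h⟩; omega),
      if_neg hi0, if_pos rfl]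
    ring
  · rw [idQ1 S w p q hSsteps hp hq n i j hi0 hi1, if_neg hi0, if_neg hi1]
    ring

lemma exit_decomp (hSsteps : ∀ s ∈ S, s ≠ (0, 0) ∧ s.1.natAbs ≤ 1 ∧ s.2.natAbs ≤ 1)
    (hp : 0 < p) (n : ℕ) (i j : ℤ) :
    exitCount S w (p, q) n (i, j) =
      (if i = 0 ∧ j < 0 then exitCount S w (p, q) n (0, j) else 0)
        + (if j = 0 ∧ i < 0 then exitCount S w (p, q) n (i, 0) else 0)
        + (if i = 0 ∧ j = 0 then exitCount S w (p, q) n (0, 0) else 0) := by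
  have hstart : Cone (p, q) := Or.inl hp
  by_cases hi : i = 0
  · subst hi
    by_cases hj : j = 0
    · subst hj
      rw [if_neg (show ¬((0 : ℤ) = 0 ∧ (0 : ℤ) < 0) from by rintro ⟨-, h⟩; exact lt_irrefl 0 h),
        if_pos (show (0 : ℤ) = 0 ∧ (0 : ℤ) = 0 from ⟨rfl, rfl⟩)]
      ring
    · by_cases hjn : j < 0
      · rw [if_pos (show (0 : ℤ) = 0 ∧ j < 0 from ⟨rfl, hjn⟩),
          if_neg (show ¬(j = 0 ∧ (0 : ℤ) < 0) from by rintro ⟨h, -⟩; exact hj h),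
          if_neg (show ¬((0 : ℤ) = 0 ∧ j = 0) from by rintro ⟨-, h⟩; exact hj h)]
        ring
      · have hc : Cone ((0 : ℤ), j) := Or.inr (by omega)
        rw [exitCount_of_cone S w (p, q) hc,
          if_neg (show ¬((0 : ℤ) = 0 ∧ j < 0) from by rintro ⟨-, h⟩; omega),
          if_neg (show ¬(j = 0 ∧ (0 : ℤ) < 0) from by rintro ⟨h, -⟩; exact hj h),
          if_neg (show ¬((0 : ℤ) = 0 ∧ j = 0) from by rintro ⟨-, h⟩; exact hj h)]
        ring
  · by_cases hj : j = 0
    · subst hj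
      by_cases hin : i < 0
      · rw [if_neg (show ¬(i = 0 ∧ (0 : ℤ) < 0) from by rintro ⟨h, -⟩; exact hi h),
          if_pos (show (0 : ℤ) = 0 ∧ i < 0 from ⟨rfl, hin⟩),
          if_neg (show ¬(i = 0 ∧ (0 : ℤ) = 0) from by rintro ⟨h, -⟩; exact hi h)]
        ring
      · have hc : Cone (i, (0 : ℤ)) := Or.inl (by omega)
        rw [exitCount_of_cone S w (p, q) hc,
          if_neg (show ¬(i = 0 ∧ (0 : ℤ) < 0) from by rintro ⟨h, -⟩; exact hi h),
          if_neg (show ¬((0 : ℤ) = 0 ∧ i < 0) from by rintro ⟨-, h⟩; omega),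
          if_neg (show ¬(i = 0 ∧ (0 : ℤ) = 0) from by rintro ⟨h, -⟩; exact hi h)]
        ring
    · have he : exitCount S w (p, q) n (i, j) = 0 := by
        by_cases hc : Cone (i, j)
        · exact exitCount_of_cone S w (p, q) hc n
        · exact exitCount_off_axes S w (p, q) hSsteps hstart hi hj n
      rw [he, if_neg (show ¬(i = 0 ∧ j < 0) from by rintro ⟨h, -⟩; exact hi h),
        if_neg (show ¬(j = 0 ∧ i < 0) from by rintro ⟨h, -⟩; exact hj h),
        if_neg (show ¬(i = 0 ∧ j = 0) from by rintro ⟨h, -⟩; exact hi h)]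
      ring

lemma id0_full (hSsteps : ∀ s ∈ S, s ≠ (0, 0) ∧ s.1.natAbs ≤ 1 ∧ s.2.natAbs ≤ 1)
    (hp : 0 < p) (hq : 0 ≤ q) (n : ℕ) (i j : ℤ) :
    kernelMul S w (q0 S w (p, q)) n (i, j) =
      -(if n = 0 ∧ ((i, j) : ℤ × ℤ) = (p, q) then (1 : ℝ) else 0)
        + (if i = 0 ∧ j = 0 then exitCount S w (p, q) n (0, 0) else 0)
        - (if i = 0 then kernelMul S w (q1 S w (p, q)) n (0, j) else 0)
        - (if i = 1 then kernelMul S w (q1 S w (p, q)) n (1, j) else 0)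
        - (if j = 0 then kernelMul S w (qM1 S w (p, q)) n (i, 0) else 0)
        - (if j = -1 then kernelMul S w (qM1 S w (p, q)) n (i, -1)
            - (if i = 0 then exitCount S w (p, q) n (0, -1) else 0) else 0) := by
  have hstart : Cone (p, q) := Or.inl hp
  rw [kernelMul_split S w (q0 S w (p, q)) (coneCount S w (p, q)) (qM1 S w (p, q))
    (q1 S w (p, q)) (q0_eq S w (p, q)) n (i, j)]
  rw [kernelMul_coneCount S w (p, q) hstart n (i, j)]
  rw [idQM1_full S w p q hSsteps hp hq n i j, idQ1_full S w p q hSsteps hp hq n i j]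
  rw [exit_decomp S w p q hSsteps hp n i j]
  ring

end full

section poly
variable (S : Finset (ℤ × ℤ)) (w : ℤ × ℤ → ℝ) (p q : ℤ)

lemma v1_vanish (hSsteps : ∀ s ∈ S, s ≠ (0, 0) ∧ s.1.natAbs ≤ 1 ∧ s.2.natAbs ≤ 1)
    (n : ℕ) (j : ℤ) (hj : j < 0) :
    kernelMul S w (q1 S w (p, q)) n (0, j) = 0 := by
  unfold kernelMul
  have h1 : q1 S w (p, q) n ((0 : ℤ), j) = 0 := by
    unfold q1
    rw [if_neg]
    rintro ⟨-, h⟩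
    have h' : 0 < j := h
    omega
  rw [h1, sub_zero]
  split_ifs with hn
  · rfl
  · apply Finset.sum_eq_zero
    intro s hsS
    have hb := (hSsteps s hsS).2.2
    have e : q1 S w (p, q) (n - 1) (((0 : ℤ), j).1 - s.1, ((0 : ℤ), j).2 - s.2) = 0 := by
      unfold q1
      rw [if_neg]
      rintro ⟨-, h⟩
      have h' : 0 < j - s.2 := h
      omega
    rw [e, mul_zero]

lemma v2_vanish (hSsteps : ∀ s ∈ S, s ≠ (0, 0) ∧ s.1.natAbs ≤ 1 ∧ s.2.natAbs ≤ 1)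
    (n : ℕ) (j : ℤ) (hj : j < 0) :
    kernelMul S w (q1 S w (p, q)) n (1, j) = 0 := by
  unfold kernelMul
  have h1 : q1 S w (p, q) n ((1 : ℤ), j) = 0 := by
    unfold q1
    rw [if_neg]
    rintro ⟨h, -⟩
    have h' : (1 : ℤ) ≤ 0 := h
    omega
  rw [h1, sub_zero]
  split_ifs with hn
  · rfl
  · apply Finset.sum_eq_zero
    intro s hsS
    have hb1 := (hSsteps s hsS).2.1
    have hb2 := (hSsteps s hsS).2.2
    have e : q1 S w (p, q) (n - 1) (((1 : ℤ), j).1 - s.1, ((1 : ℤ), j).2 - s.2) = 0 := by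
      unfold q1
      rw [if_neg]
      rintro ⟨h1, h2⟩
      have h1' : 1 - s.1 ≤ 0 := h1
      have h2' : 0 < j - s.2 := h2
      omega
    rw [e, mul_zero]

lemma h1_vanish (hSsteps : ∀ s ∈ S, s ≠ (0, 0) ∧ s.1.natAbs ≤ 1 ∧ s.2.natAbs ≤ 1)
    (n : ℕ) (i : ℤ) (hi : i < 0) :
    kernelMul S w (qM1 S w (p, q)) n (i, 0) = 0 := by
  unfold kernelMul
  have h1 : qM1 S w (p, q) n (i, (0 : ℤ)) = 0 := by
    unfold qM1
    rw [if_neg]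
    rintro ⟨h, -⟩
    have h' : 0 < i := h
    omega
  rw [h1, sub_zero]
  split_ifs with hn
  · rfl
  · apply Finset.sum_eq_zero
    intro s hsS
    have hb := (hSsteps s hsS).2.1
    have e : qM1 S w (p, q) (n - 1) ((i, (0 : ℤ)).1 - s.1, (i, (0 : ℤ)).2 - s.2) = 0 := by
      unfold qM1
      rw [if_neg]
      rintro ⟨h, -⟩
      have h' : 0 < i - s.1 := h
      omega
    rw [e, mul_zero]

lemma h2_vanish (hSsteps : ∀ s ∈ S, s ≠ (0, 0) ∧ s.1.natAbs ≤ 1 ∧ s.2.natAbs ≤ 1)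
    (n : ℕ) (i : ℤ) (hi : i < 0) :
    kernelMul S w (qM1 S w (p, q)) n (i, -1)
      - (if i = 0 then exitCount S w (p, q) n (0, -1) else 0) = 0 := by
  rw [if_neg (by omega), sub_zero]
  unfold kernelMul
  have h1 : qM1 S w (p, q) n (i, (-1 : ℤ)) = 0 := by
    unfold qM1
    rw [if_neg]
    rintro ⟨h, -⟩
    have h' : 0 < i := h
    omega
  rw [h1, sub_zero]
  split_ifs with hn
  · rfl
  · apply Finset.sum_eq_zero
    intro s hsS
    have hb := (hSsteps s hsS).2.1
    have e : qM1 S w (p, q) (n - 1) ((i, (-1 : ℤ)).1 - s.1, (i, (-1 : ℤ)).2 - s.2) = 0 := by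
      unfold qM1
      rw [if_neg]
      rintro ⟨h, -⟩
      have h' : 0 < i - s.1 := h
      omega
    rw [e, mul_zero]

lemma qM1_bound (hSsteps : ∀ s ∈ S, s ≠ (0, 0) ∧ s.1.natAbs ≤ 1 ∧ s.2.natAbs ≤ 1)
    (m : ℕ) (u : ℤ × ℤ) (hu : qM1 S w (p, q) m u ≠ 0) :
    |u.1 - p| ≤ m ∧ |u.2 - q| ≤ m := by
  have hc : coneCount S w (p, q) m u ≠ 0 := by
    intro h0
    apply hu
    unfold qM1
    split_ifs with h
    · exact h0
    · rfl
  exact coneCount_bound S w (p, q) hSsteps hc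

lemma q1_bound (hSsteps : ∀ s ∈ S, s ≠ (0, 0) ∧ s.1.natAbs ≤ 1 ∧ s.2.natAbs ≤ 1)
    (m : ℕ) (u : ℤ × ℤ) (hu : q1 S w (p, q) m u ≠ 0) :
    |u.1 - p| ≤ m ∧ |u.2 - q| ≤ m := by
  have hc : coneCount S w (p, q) m u ≠ 0 := by
    intro h0
    apply hu
    unfold q1
    split_ifs with h
    · exact h0
    · rfl
  exact coneCount_bound S w (p, q) hSsteps hc

lemma v1_support (hSsteps : ∀ s ∈ S, s ≠ (0, 0) ∧ s.1.natAbs ≤ 1 ∧ s.2.natAbs ≤ 1) (n : ℕ)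
    (c : ℤ) :
    (Function.support (fun j => kernelMul S w (q1 S w (p, q)) n (c, j))).Finite := by
  apply Set.Finite.subset (Set.finite_Icc (q - (n + 1)) (q + (n + 1)))
  intro j hj
  have hb := (kernelMul_bound S w (p, q) hSsteps (q1 S w (p, q))
    (q1_bound S w p q hSsteps) hj).2
  have hb' : |j - q| ≤ (n : ℤ) + 1 := hb
  have := abs_le.mp hb'
  rw [Set.mem_Icc]
  omega

lemma h1_support (hSsteps : ∀ s ∈ S, s ≠ (0, 0) ∧ s.1.natAbs ≤ 1 ∧ s.2.natAbs ≤ 1) (n : ℕ)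
    (c : ℤ) :
    (Function.support (fun i => kernelMul S w (qM1 S w (p, q)) n (i, c))).Finite := by
  apply Set.Finite.subset (Set.finite_Icc (p - (n + 1)) (p + (n + 1)))
  intro i hi
  have hb := (kernelMul_bound S w (p, q) hSsteps (qM1 S w (p, q))
    (qM1_bound S w p q hSsteps) hi).1
  have hb' : |i - p| ≤ (n : ℤ) + 1 := hb
  have := abs_le.mp hb'
  rw [Set.mem_Icc]
  omega

lemma h2_support (hSsteps : ∀ s ∈ S, s ≠ (0, 0) ∧ s.1.natAbs ≤ 1 ∧ s.2.natAbs ≤ 1) (n : ℕ) :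
    (Function.support (fun i => kernelMul S w (qM1 S w (p, q)) n (i, -1)
      - (if i = 0 then exitCount S w (p, q) n (0, -1) else 0))).Finite := by
  apply Set.Finite.subset ((h1_support S w p q hSsteps n (-1)).union (Set.finite_singleton 0))
  intro i hi
  rw [Function.mem_support] at hi
  by_cases h0 : i = 0
  · exact Or.inr h0
  · left
    rw [Function.mem_support]
    intro h
    apply hi
    rw [if_neg h0, sub_zero]
    exact h

end poly

/-- There exist unique series `V₁(y;t), V₂(y;t) ∈ ℝ[y][[t]]`
and `H₁(x;t), H₂(x;t) ∈ ℝ[x][[t]]` satisfying, coefficientwise, the three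
identities
`K·Q₋₁ = A + H₁ + (1/y)H₂`,
`K·Q₀ = −x^p y^q + F − V₁ − x V₂ − H₁ − (1/y)H₂`,
`K·Q₁ = B + V₁ + x V₂`. -/
theorem statement1 (S : Finset (ℤ × ℤ)) (hS : S.Nonempty)
    (hSsteps : ∀ s ∈ S, s ≠ (0, 0) ∧ s.1.natAbs ≤ 1 ∧ s.2.natAbs ≤ 1)
    (w : ℤ × ℤ → ℝ) (hw : ∀ s ∈ S, 0 < w s)
    (p q : ℤ) (hp : 0 < p) (hq : 0 ≤ q) :
    ∃! VH : (ℕ → ℤ → ℝ) × (ℕ → ℤ → ℝ) × (ℕ → ℤ → ℝ) × (ℕ → ℤ → ℝ),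
      -- `V₁, V₂ ∈ ℝ[y][[t]]` : only nonnegative exponents, each `t`-coefficient
      -- a polynomial
      (∀ n j, j < 0 → VH.1 n j = 0) ∧ (∀ n, (Function.support (VH.1 n)).Finite) ∧
      (∀ n j, j < 0 → VH.2.1 n j = 0) ∧ (∀ n, (Function.support (VH.2.1 n)).Finite) ∧
      -- `H₁, H₂ ∈ ℝ[x][[t]]`
      (∀ n i, i < 0 → VH.2.2.1 n i = 0) ∧ (∀ n, (Function.support (VH.2.2.1 n)).Finite) ∧
      (∀ n i, i < 0 → VH.2.2.2 n i = 0) ∧ (∀ n, (Function.support (VH.2.2.2 n)).Finite) ∧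
      -- `K(x,y;t)·Q₋₁(x,1/y;t) = A(1/y;t) + H₁(x;t) + (1/y)·H₂(x;t)`
      (∀ (n : ℕ) (i j : ℤ),
        kernelMul S w (qM1 S w (p, q)) n (i, j) =
          (if i = 0 ∧ j < 0 then exitCount S w (p, q) n (0, j) else 0)
            + (if j = 0 then VH.2.2.1 n i else 0)
            + (if j = -1 then VH.2.2.2 n i else 0)) ∧
      -- `K·Q₀ = −x^p y^q + F(t) − V₁(y;t) − x·V₂(y;t) − H₁(x;t) − (1/y)·H₂(x;t)`
      (∀ (n : ℕ) (i j : ℤ),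
        kernelMul S w (q0 S w (p, q)) n (i, j) =
          -(if n = 0 ∧ (i, j) = (p, q) then (1 : ℝ) else 0)
            + (if i = 0 ∧ j = 0 then exitCount S w (p, q) n (0, 0) else 0)
            - (if i = 0 then VH.1 n j else 0)
            - (if i = 1 then VH.2.1 n j else 0)
            - (if j = 0 then VH.2.2.1 n i else 0)
            - (if j = -1 then VH.2.2.2 n i else 0)) ∧
      -- `K·Q₁ = B(1/x;t) + V₁(y;t) + x·V₂(y;t)`
      (∀ (n : ℕ) (i j : ℤ),
        kernelMul S w (q1 S w (p, q)) n (i, j) =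
          (if j = 0 ∧ i < 0 then exitCount S w (p, q) n (i, 0) else 0)
            + (if i = 0 then VH.1 n j else 0)
            + (if i = 1 then VH.2.1 n j else 0)) := by
  have hstart : Cone (p, q) := Or.inl hp
  refine ⟨(fun n j => kernelMul S w (q1 S w (p, q)) n (0, j),
           fun n j => kernelMul S w (q1 S w (p, q)) n (1, j),
           fun n i => kernelMul S w (qM1 S w (p, q)) n (i, 0),
           fun n i => kernelMul S w (qM1 S w (p, q)) n (i, -1)
             - (if i = 0 then exitCount S w (p, q) n (0, -1) else 0)),
    ⟨fun n j hj => v1_vanish S w p q hSsteps n j hj,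
     fun n => v1_support S w p q hSsteps n 0,
     fun n j hj => v2_vanish S w p q hSsteps n j hj,
     fun n => v1_support S w p q hSsteps n 1,
     fun n i hi => h1_vanish S w p q hSsteps n i hi,
     fun n => h1_support S w p q hSsteps n 0,
     fun n i hi => h2_vanish S w p q hSsteps n i hi,
     fun n => h2_support S w p q hSsteps n,
     fun n i j => idQM1_full S w p q hSsteps hp hq n i j,
     fun n i j => id0_full S w p q hSsteps hp hq n i j,
     fun n i j => idQ1_full S w p q hSsteps hp hq n i j⟩,
    ?_⟩
  rintro ⟨V1', V2', H1', H2'⟩ ⟨-, -, -, -, -, -, -, -, e1, -, e3⟩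
  have hv1 : V1' = fun n j => kernelMul S w (q1 S w (p, q)) n (0, j) := by
    funext n j
    have h := e3 n 0 j
    rw [if_neg (show ¬(j = 0 ∧ (0 : ℤ) < 0) from by rintro ⟨-, h'⟩; exact lt_irrefl 0 h'),
      if_pos rfl, if_neg (show ¬((0 : ℤ) = 1) from by norm_num)] at h
    rw [h]
    ring
  have hv2 : V2' = fun n j => kernelMul S w (q1 S w (p, q)) n (1, j) := by
    funext n j
    have h := e3 n 1 j
    rw [if_neg (show ¬(j = 0 ∧ (1 : ℤ) < 0) from by rintro ⟨-, h'⟩; omega),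
      if_neg (show ¬((1 : ℤ) = 0) from by norm_num), if_pos rfl] at h
    rw [h]
    ring
  have hh1 : H1' = fun n i => kernelMul S w (qM1 S w (p, q)) n (i, 0) := by
    funext n i
    have h := e1 n i 0
    rw [if_neg (show ¬(i = 0 ∧ (0 : ℤ) < 0) from by rintro ⟨-, h'⟩; exact lt_irrefl 0 h'),
      if_pos rfl, if_neg (show ¬((0 : ℤ) = -1) from by norm_num)] at h
    rw [h]
    ring
  have hh2 : H2' = fun n i => kernelMul S w (qM1 S w (p, q)) n (i, -1)
      - (if i = 0 then exitCount S w (p, q) n (0, -1) else 0) := by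
    funext n i
    have h := e1 n i (-1)
    have hc : (if i = 0 ∧ (-1 : ℤ) < 0 then exitCount S w (p, q) n (0, -1) else 0)
        = (if i = 0 then exitCount S w (p, q) n (0, -1) else 0) := by
      apply if_congr _ rfl rfl
      constructor
      · exact fun h' => h'.1
      · exact fun h' => ⟨h', by norm_num⟩
    rw [hc, if_neg (show ¬((-1 : ℤ) = 0) from by norm_num), if_pos rfl] at h
    rw [h]
    ring
  simp only [Prod.mk.injEq]
  exact ⟨hv1, hv2, hh1, hh2⟩
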